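/- arXiv:1506.04378 — 5 statements merged into one kernel-verified Lean document; each statement's English description precedes it below -/
import Mathlib

section
/- Let G be a finite non-abelian group and let x, y be two distinct non-central elements of G. Then the number of elements g ∈ G that commute with neither x nor y is at least |G|/6. -/
theorem stmt_0 (G : Type*) [Group G] [Finite G]
    (hG : ∃ a b : G, a * b ≠ b * a)
    (x y : G) (hx : x ∉ Subgroup.center G) (hy : y ∉ Subgroup.center G)
    (hxy : x ≠ y) :
    Nat.card G ≤ 6 * Nat.card {g : G // g * x ≠ x * g ∧ g * y ≠ y * g} := by
  classical
  set A : Subgroup G := Subgroup.centralizer {x} with hA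
  set B : Subgroup G := Subgroup.centralizer {y} with hB
  have hAtop : A ≠ ⊤ := by
    intro h
    apply hx
    rw [Subgroup.mem_center_iff]
    intro g
    have hg : g ∈ A := h ▸ Subgroup.mem_top g
    rw [hA, Subgroup.mem_centralizer_singleton_iff] at hg
    exact hg
  have hBtop : B ≠ ⊤ := by
    intro h
    apply hy
    rw [Subgroup.mem_center_iff]
    intro g
    have hg : g ∈ B := h ▸ Subgroup.mem_top g
    rw [hB, Subgroup.mem_centralizer_singleton_iff] at hg
    exact hg
  have hiA : 2 ≤ A.index := by
    have h0 : A.index ≠ 0 := Subgroup.index_ne_zero_of_finite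
    have h1 : A.index ≠ 1 := fun h => hAtop (Subgroup.index_eq_one.mp h)
    omega
  have hiB : 2 ≤ B.index := by
    have h0 : B.index ≠ 0 := Subgroup.index_ne_zero_of_finite
    have h1 : B.index ≠ 1 := fun h => hBtop (Subgroup.index_eq_one.mp h)
    omega
  have hcardA : Nat.card A * A.index = Nat.card G := A.card_mul_index
  have hcardB : Nat.card B * B.index = Nat.card G := B.card_mul_index
  have hcardI : Nat.card (A ⊓ B : Subgroup G) * (A ⊓ B : Subgroup G).index = Nat.card G :=
    (A ⊓ B).card_mul_index
  have hinfle : (A ⊓ B : Subgroup G).index ≤ A.index * B.index := Subgroup.index_inf_le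
  -- sets
  set s : Set G := (A : Set G) with hs
  set t : Set G := (B : Set G) with ht
  have hsA : s.ncard = Nat.card A := (Nat.card_coe_set_eq s).symm
  have htB : t.ncard = Nat.card B := (Nat.card_coe_set_eq t).symm
  have hstI : (s ∩ t).ncard = Nat.card (A ⊓ B : Subgroup G) := by
    have : s ∩ t = ((A ⊓ B : Subgroup G) : Set G) := by
      rw [hs, ht]; ext g; simp [Subgroup.mem_inf]
    rw [this]
    exact (Nat.card_coe_set_eq _).symm
  have h1 : (s ∪ t).ncard + (s ∩ t).ncard = s.ncard + t.ncard :=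
    Set.ncard_union_add_ncard_inter s t
  have h2 : (s ∪ t).ncard + (s ∪ t)ᶜ.ncard = Nat.card G :=
    Set.ncard_add_ncard_compl (s ∪ t)
  have hcompl : (s ∪ t)ᶜ = {g : G | g * x ≠ x * g ∧ g * y ≠ y * g} := by
    ext g
    simp only [Set.mem_compl_iff, Set.mem_union, Set.mem_setOf_eq, not_or, hs, ht,
      SetLike.mem_coe, hA, hB, Subgroup.mem_centralizer_singleton_iff]
  have hcount : Nat.card {g : G // g * x ≠ x * g ∧ g * y ≠ y * g} = (s ∪ t)ᶜ.ncard := by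
    rw [hcompl]
    exact (Nat.card_coe_set_eq _)
  rw [hcount]
  -- case analysis
  by_cases h3A : 3 ≤ A.index
  · have : 3 * Nat.card A ≤ Nat.card G := by
      calc 3 * Nat.card A ≤ A.index * Nat.card A := Nat.mul_le_mul_right _ h3A
      _ = Nat.card G := by rw [mul_comm]; exact hcardA
    have h2B : 2 * Nat.card B ≤ Nat.card G := by
      calc 2 * Nat.card B ≤ B.index * Nat.card B := Nat.mul_le_mul_right _ hiB
      _ = Nat.card G := by rw [mul_comm]; exact hcardB
    omega
  · by_cases h3B : 3 ≤ B.index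
    · have : 3 * Nat.card B ≤ Nat.card G := by
        calc 3 * Nat.card B ≤ B.index * Nat.card B := Nat.mul_le_mul_right _ h3B
        _ = Nat.card G := by rw [mul_comm]; exact hcardB
      have h2A : 2 * Nat.card A ≤ Nat.card G := by
        calc 2 * Nat.card A ≤ A.index * Nat.card A := Nat.mul_le_mul_right _ hiA
        _ = Nat.card G := by rw [mul_comm]; exact hcardA
      omega
    · have hA2 : A.index = 2 := by omega
      have hB2 : B.index = 2 := by omega
      have h4 : (A ⊓ B : Subgroup G).index ≤ 4 := by
        rw [hA2, hB2] at hinfle; omega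
      have hG4 : Nat.card G ≤ 4 * Nat.card (A ⊓ B : Subgroup G) := by
        calc Nat.card G = Nat.card (A ⊓ B : Subgroup G) * (A ⊓ B : Subgroup G).index :=
          hcardI.symm
        _ ≤ Nat.card (A ⊓ B : Subgroup G) * 4 := Nat.mul_le_mul_left _ h4
        _ = 4 * Nat.card (A ⊓ B : Subgroup G) := by ring
      have h2A : 2 * Nat.card A ≤ Nat.card G := by
        calc 2 * Nat.card A ≤ A.index * Nat.card A := Nat.mul_le_mul_right _ hiA
        _ = Nat.card G := by rw [mul_comm]; exact hcardA
      have h2B : 2 * Nat.card B ≤ Nat.card G := by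
        calc 2 * Nat.card B ≤ B.index * Nat.card B := Nat.mul_le_mul_right _ hiB
        _ = Nat.card G := by rw [mul_comm]; exact hcardB
      omega
end

section
/- Let G be a finite non-abelian group. Then for any two distinct non-central elements x and y of G that commute with each other, there exists a non-central element z commuting with neither x nor y. In other words, the non-commuting graph of G has diameter at most 2. -/
theorem stmt_4 (G : Type*) [Group G] [Finite G]
    (hG : ∃ a b : G, a * b ≠ b * a)
    (x y : G) (hx : x ∉ Subgroup.center G) (hy : y ∉ Subgroup.center G)
    (hxy : x ≠ y) (hc : x * y = y * x) :
    ∃ z : G, z * x ≠ x * z ∧ z * y ≠ y * z := by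
  simp only [Subgroup.mem_center_iff, not_forall] at hx hy
  obtain ⟨a, ha⟩ := hx
  obtain ⟨b, hb⟩ := hy
  by_cases hay : a * y = y * a
  · by_cases hbx : b * x = x * b
    · refine ⟨a * b, fun h => ha ?_, fun h => hb ?_⟩
      · have h1 : a * x * b = x * a * b := by
          rw [mul_assoc, ← hbx, ← mul_assoc, h, mul_assoc]
        exact mul_right_cancel h1
      · have h1 : a * (b * y) = a * (y * b) := by
          rw [← mul_assoc, h, ← mul_assoc, ← hay, mul_assoc]
        exact mul_left_cancel h1
    · exact ⟨b, hbx, hb⟩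
  · exact ⟨a, ha, hay⟩
end

section
/- Let m ≥ 2 and let Q_{4m} be the generalized quaternion (dicyclic) group of order 4m. Then the non-commuting graph of Q_{4m} is isomorphic to the complete (m+1)-partite graph with m parts of size 2 and one part of size 2m−2. -/
/-!
Two non-central elements of `Q_{4m}` commute exactly when they have the same `commPart`:
the non-central powers `a i` (those with `2 * i ≠ 0`, i.e. `i ∉ {0, m}`) all commute with one
another and with no `xa j`, giving one class of size `2m - 2`, while `xa i` and `xa j` commute
iff `2 * i = 2 * j`, i.e. iff `j ∈ {i, i + m}`, giving `m` classes of size `2`. A graph in which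
adjacency means lying in different fibres of a map is the complete multipartite graph on the
fibres.
-/

/-- The non-commuting graph of a group `G`. -/
def ncGraph (G : Type*) [Group G] : SimpleGraph {x : G // x ∉ Subgroup.center G} where
  Adj x y := (x : G) * y ≠ (y : G) * x
  symm := ⟨fun _ _ h e => h e.symm⟩
  loopless := ⟨fun _ h => h rfl⟩

namespace SimpleGraph

variable {V ι : Type*} {G : SimpleGraph V}

def isoCompleteMultipartiteGraphOfAdjIff (f : V → ι) (h : ∀ x y, G.Adj x y ↔ f x ≠ f y) :
    G ≃g completeMultipartiteGraph (fun i => {x // f x = i}) where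
  toEquiv := (Equiv.sigmaFiberEquiv f).symm
  map_rel_iff' := by simp [h]

def completeMultipartiteGraph.congrRight {V W : ι → Type*} (e : ∀ i, V i ≃ W i) :
    completeMultipartiteGraph V ≃g completeMultipartiteGraph W where
  toEquiv := Equiv.sigmaCongrRight e
  map_rel_iff' := Iff.rfl

theorem nonempty_iso_completeMultipartiteGraph {W : ι → Type*} (f : V → ι)
    (h : ∀ x y, G.Adj x y ↔ f x ≠ f y) (hW : ∀ i, Nonempty ({x // f x = i} ≃ W i)) :
    Nonempty (G ≃g completeMultipartiteGraph W) :=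
  ⟨(isoCompleteMultipartiteGraphOfAdjIff f h).trans
    (completeMultipartiteGraph.congrRight fun i => (hW i).some)⟩

end SimpleGraph

namespace ZMod

variable {m : ℕ} [NeZero m]

theorem two_mul_eq_zero_iff (k : ZMod (2 * m)) : 2 * k = 0 ↔ k = 0 ∨ k = m := by
  constructor
  · intro h
    have hdvd : 2 * m ∣ 2 * k.val := by
      rw [← natCast_eq_zero_iff]; push_cast [natCast_zmod_val]; exact h
    obtain ⟨c, hc⟩ := (Nat.mul_dvd_mul_iff_left two_pos).mp hdvd
    have hc2 : c < 2 := by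
      have := val_lt k
      by_contra!
      nlinarith [NeZero.pos m]
    rw [← natCast_zmod_val k, hc]
    interval_cases c <;> simp
  · rintro (rfl | rfl)
    · simp
    · exact_mod_cast natCast_self (2 * m)

theorem natCard_two_mul_eq_zero : Nat.card {k : ZMod (2 * m) // 2 * k = 0} = 2 := by
  have hzero_ne : (0 : ZMod (2 * m)) ≠ m := by
    rw [ne_comm, Ne, natCast_eq_zero_iff]
    exact Nat.not_dvd_of_pos_of_lt (NeZero.pos m) (by have := NeZero.pos m; omega)
  simp_rw [two_mul_eq_zero_iff]
  classical
  rw [Nat.card_eq_fintype_card, Fintype.card_subtype]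
  convert Finset.card_pair hzero_ne
  ext; simp

theorem natCard_two_mul_ne_zero : Nat.card {k : ZMod (2 * m) // 2 * k ≠ 0} = 2 * m - 2 := by
  classical
  rw [Nat.card_eq_fintype_card, Fintype.card_subtype_compl, card, ← Nat.card_eq_fintype_card,
    natCard_two_mul_eq_zero]

theorem two_mul_eq_two_mul_iff (i j : ZMod (2 * m)) : 2 * i = 2 * j ↔ i.val % m = j.val % m := by
  have hcast : 2 * i = 2 * j ↔ ((2 * i.val : ℕ) : ZMod (2 * m)) = (2 * j.val : ℕ) := by
    push_cast [natCast_zmod_val]; rfl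
  rw [hcast, natCast_eq_natCast_iff', Nat.mul_mod_mul_left, Nat.mul_mod_mul_left]
  omega

end ZMod

namespace QuaternionGroup

open Subgroup

variable {m : ℕ}

theorem commute_a_a (i j : ZMod (2 * m)) : Commute (a i) (a j) := by
  simp [Commute, SemiconjBy, add_comm]

theorem commute_a_xa_iff (i j : ZMod (2 * m)) : Commute (a i) (xa j) ↔ 2 * i = 0 := by
  simp only [Commute, SemiconjBy, a_mul_xa, xa_mul_a, xa.injEq]
  constructor <;> intro h <;> linear_combination -h

theorem commute_xa_xa_iff (i j : ZMod (2 * m)) : Commute (xa i) (xa j) ↔ 2 * i = 2 * j := by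
  simp only [Commute, SemiconjBy, xa_mul_xa, a.injEq]
  constructor <;> intro h <;> linear_combination -h

theorem a_mem_center_iff (i : ZMod (2 * m)) : a i ∈ center (QuaternionGroup m) ↔ 2 * i = 0 := by
  rw [mem_center_iff]
  refine ⟨fun h => (commute_a_xa_iff i 0).mp (h (xa 0)).symm, fun h g => ?_⟩
  rcases g with j | j
  · exact commute_a_a j i
  · exact ((commute_a_xa_iff i j).mpr h).symm

theorem xa_notMem_center (hm : 2 ≤ m) (i : ZMod (2 * m)) : xa i ∉ center (QuaternionGroup m) := by
  intro h
  have htwo : ((2 : ℕ) : ZMod (2 * m)) = 0 := by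
    simpa using (commute_a_xa_iff 1 i).mp (mem_center_iff.mp h (a 1))
  rw [ZMod.natCast_eq_zero_iff] at htwo
  have := Nat.le_of_dvd two_pos htwo
  omega

variable [NeZero m]

def commPart : QuaternionGroup m → Fin (m + 1)
  | a _ => Fin.last m
  | xa i => Fin.castSucc ⟨i.val % m, Nat.mod_lt _ (NeZero.pos m)⟩

theorem val_commPart_xa (i : ZMod (2 * m)) : (commPart (xa i)).val = i.val % m := rfl

theorem commPart_xa_eq_iff (i j : ZMod (2 * m)) :
    commPart (xa i) = commPart (xa j) ↔ 2 * i = 2 * j := by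
  rw [Fin.ext_iff, val_commPart_xa, val_commPart_xa, ZMod.two_mul_eq_two_mul_iff]

theorem commPart_xa_ne_last (i : ZMod (2 * m)) : commPart (xa i) ≠ Fin.last m :=
  (Fin.castSucc_lt_last _).ne

theorem commPart_xa_natCast (k : Fin m) : commPart (xa ((k : ℕ) : ZMod (2 * m))) = k.castSucc := by
  rw [Fin.ext_iff, val_commPart_xa, ZMod.val_cast_of_lt (by omega), Nat.mod_eq_of_lt k.isLt,
    Fin.val_castSucc]

theorem commute_iff_commPart_eq {x y : QuaternionGroup m} (hx : x ∉ center (QuaternionGroup m))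
    (hy : y ∉ center (QuaternionGroup m)) : Commute x y ↔ commPart x = commPart y := by
  rcases x with i | i <;> rcases y with j | j
  · exact iff_of_true (commute_a_a i j) rfl
  · rw [a_mem_center_iff] at hx
    exact iff_of_false (by rwa [commute_a_xa_iff]) (commPart_xa_ne_last j).symm
  · rw [a_mem_center_iff] at hy
    exact iff_of_false (by rwa [Commute.symm_iff, commute_a_xa_iff]) (commPart_xa_ne_last i)
  · rw [commute_xa_xa_iff, commPart_xa_eq_iff]

theorem natCard_commPart_eq_last :
    Nat.card {x : {g : QuaternionGroup m // g ∉ center _} // commPart x.1 = Fin.last m} =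
      2 * m - 2 := by
  rw [← ZMod.natCard_two_mul_ne_zero]
  refine (Nat.card_eq_of_bijective (fun k => ⟨⟨a k.1, (a_mem_center_iff _).not.mpr k.2⟩, rfl⟩)
    ⟨fun k l h => ?_, ?_⟩).symm
  · exact Subtype.ext (a.inj (congrArg (·.1.1) h))
  · rintro ⟨⟨i | i, hg⟩, hpart⟩
    · exact ⟨⟨i, (a_mem_center_iff i).not.mp hg⟩, rfl⟩
    · exact absurd hpart (commPart_xa_ne_last i)

theorem natCard_commPart_eq_castSucc (hm : 2 ≤ m) (k : Fin m) :
    Nat.card {x : {g : QuaternionGroup m // g ∉ center _} // commPart x.1 = k.castSucc} = 2 := by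
  rw [← ZMod.natCard_two_mul_eq_zero (m := m)]
  set j : ZMod (2 * m) := ((k : ℕ) : ZMod (2 * m))
  have hpart (i : ZMod (2 * m)) : commPart (xa i) = k.castSucc ↔ 2 * (i - j) = 0 := by
    rw [← commPart_xa_natCast k, commPart_xa_eq_iff, mul_sub, sub_eq_zero]
  refine (Nat.card_eq_of_bijective (fun t => ⟨⟨xa (j + t.1), xa_notMem_center hm _⟩,
    (hpart _).mpr (by simpa using t.2)⟩) ⟨fun s t h => ?_, ?_⟩).symm
  · exact Subtype.ext (add_left_cancel (xa.inj (congrArg (·.1.1) h)))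
  · rintro ⟨⟨i | i, hg⟩, hi⟩
    · exact absurd hi (Fin.castSucc_lt_last k).ne'
    · exact ⟨⟨i - j, (hpart i).mp hi⟩, by simp⟩

end QuaternionGroup

theorem stmt_10 (m : ℕ) (hm : 2 ≤ m) :
    Nonempty (ncGraph (QuaternionGroup m) ≃g
      SimpleGraph.completeMultipartiteGraph
        (fun i : Fin (m + 1) => if (i : ℕ) < m then Fin 2 else Fin (2 * m - 2))) := by
  have : NeZero m := ⟨by omega⟩
  refine SimpleGraph.nonempty_iso_completeMultipartiteGraph (fun x => QuaternionGroup.commPart x.1)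
    (fun x y => (QuaternionGroup.commute_iff_commPart_eq x.2 y.2).not) fun i => ?_
  induction i using Fin.lastCases with
  | last =>
    simp only [Fin.val_last, lt_irrefl, if_false]
    rw [← Finite.card_eq, QuaternionGroup.natCard_commPart_eq_last, Nat.card_fin]
  | cast k =>
    simp only [Fin.val_castSucc, k.isLt, if_true]
    rw [← Finite.card_eq, QuaternionGroup.natCard_commPart_eq_castSucc hm k, Nat.card_fin]
end

section
/- Let G be a finite non-abelian group. Then the vertex connectivity of the non-commuting graph Γ_G is divisible by |Z(G)|. -/
/-!
If `x` lies in a vertex cut `S` and some `y ∉ S` is adjacent to every neighbour of `x`, then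
`S \ {x}` is still a cut: a path through `x` could be rerouted through `y`. So a minimum cut
contains, with each of its vertices, every vertex dominating its neighbourhood. In the
non-commuting graph `x` and `x * z` have the same neighbours for every central `z`, hence a
minimum cut is a union of cosets of `Z(G)` and its size is a multiple of `|Z(G)|`.
-/

open scoped Classical
/-- The vertex connectivity of a finite graph: the least size of a set of
vertices whose deletion disconnects the graph. -/
noncomputable def vertexConnectivity {V : Type*} [Fintype V] (Γ : SimpleGraph V) : ℕ :=
  sInf {k | ∃ S : Finset V, S.card = k ∧
    ¬ (Γ.induce {v : V | v ∉ S}).Connected}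

theorem Subgroup.card_dvd_card_of_forall_mul_mem {G : Type*} [Group G] (H : Subgroup G)
    {s : Set G} (hs : ∀ g ∈ s, ∀ h ∈ H, g * h ∈ s) : Nat.card H ∣ Nat.card s := by
  have hsat : s = QuotientGroup.mk ⁻¹' (QuotientGroup.mk '' s : Set (G ⧸ H)) := by
    refine (Set.subset_preimage_image _ _).antisymm ?_
    rintro g ⟨g', hg', hgg'⟩
    simpa using hs g' hg' _ (QuotientGroup.eq.mp hgg')
  rw [hsat, QuotientGroup.card_preimage_mk]
  exact dvd_mul_right _ _

namespace SimpleGraph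

variable {V : Type*} (Γ : SimpleGraph V)

theorem not_connected_induce_compl_erase [DecidableEq V] {S : Finset V} {x y : V}
    (hx : x ∈ S) (hy : y ∉ S) (hxy : ∀ w, Γ.Adj x w → Γ.Adj y w)
    (hS : ¬ (Γ.induce {v | v ∉ S}).Connected) :
    ¬ (Γ.induce {v | v ∉ S.erase x}).Connected := by
  have mem_of_ne {v : V} (hv : v ∉ S.erase x) (hvx : v ≠ x) : v ∉ S :=
    fun h => hv (Finset.mem_erase.mpr ⟨hvx, h⟩)
  let reroute : {v | v ∉ S.erase x} → {v | v ∉ S} := fun v =>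
    if hvx : v.1 = x then ⟨y, hy⟩ else ⟨v.1, mem_of_ne v.2 hvx⟩
  have reroute_of_ne (v : {v | v ∉ S.erase x}) (hvx : v.1 ≠ x) :
      reroute v = ⟨v.1, mem_of_ne v.2 hvx⟩ := dif_neg hvx
  have reroute_of_eq (v : {v | v ∉ S.erase x}) (hvx : v.1 = x) : reroute v = ⟨y, hy⟩ :=
    dif_pos hvx
  let f : Γ.induce {v | v ∉ S.erase x} →g Γ.induce {v | v ∉ S} :=
    { toFun := reroute
      map_rel' := by
        rintro a b (hab : Γ.Adj a.1 b.1)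
        by_cases ha : a.1 = x <;> by_cases hb : b.1 = x
        · exact absurd (ha.trans hb.symm) hab.ne
        · rw [reroute_of_eq a ha, reroute_of_ne b hb]
          exact hxy _ (by rwa [ha] at hab)
        · rw [reroute_of_ne a ha, reroute_of_eq b hb]
          exact (hxy _ (by rw [hb] at hab; exact hab.symm)).symm
        · rw [reroute_of_ne a ha, reroute_of_ne b hb]
          exact hab }
  have hf : Function.Surjective f := by
    rintro ⟨v, hv⟩
    have hvx : v ≠ x := by rintro rfl; exact hv hx
    exact ⟨⟨v, fun h => hv (Finset.mem_of_mem_erase h)⟩, reroute_of_ne _ hvx⟩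
  exact fun h => hS (h.map f hf)

end SimpleGraph

section VertexConnectivity

variable {V : Type*} [Fintype V] (Γ : SimpleGraph V)

theorem vertexConnectivity_le_card {S : Finset V}
    (hS : ¬ (Γ.induce {v | v ∉ S}).Connected) : vertexConnectivity Γ ≤ S.card :=
  Nat.sInf_le ⟨S, rfl, hS⟩

theorem exists_card_eq_vertexConnectivity :
    ∃ S : Finset V, S.card = vertexConnectivity Γ ∧ ¬ (Γ.induce {v | v ∉ S}).Connected :=
  Nat.sInf_mem (s := {k | ∃ S : Finset V, S.card = k ∧ ¬ (Γ.induce {v | v ∉ S}).Connected})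
    ⟨_, Finset.univ, rfl, fun h => h.nonempty.elim fun v => v.2 (Finset.mem_univ _)⟩

theorem mem_of_card_eq_vertexConnectivity {S : Finset V}
    (hcard : S.card = vertexConnectivity Γ) (hS : ¬ (Γ.induce {v | v ∉ S}).Connected)
    {x y : V} (hx : x ∈ S) (hxy : ∀ w, Γ.Adj x w → Γ.Adj y w) : y ∈ S := by
  by_contra hy
  have := vertexConnectivity_le_card Γ (Γ.not_connected_induce_compl_erase hx hy hxy hS)
  rw [Finset.card_erase_of_mem hx] at this
  have := Finset.card_pos.mpr ⟨x, hx⟩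
  omega

end VertexConnectivity

theorem ncGraph_adj_iff_of_eq_mul_center {G : Type*} [Group G]
    {v w u : {x : G // x ∉ Subgroup.center G}} {z : G} (hz : z ∈ Subgroup.center G)
    (hw : (w : G) = v * z) : (ncGraph G).Adj w u ↔ (ncGraph G).Adj v u := by
  have hz' := Subgroup.mem_center_iff.mp hz
  change (w : G) * u ≠ u * w ↔ (v : G) * u ≠ u * v
  rw [hw, mul_assoc, ← hz' u, ← mul_assoc, ← mul_assoc, Ne, Ne, mul_left_inj]

theorem stmt_17_general (G : Type*) [Group G] [Fintype G] :
    Nat.card (Subgroup.center G) ∣ vertexConnectivity (ncGraph G) := by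
  obtain ⟨S, hcard, hS⟩ := exists_card_eq_vertexConnectivity (ncGraph G)
  let s : Set G := Subtype.val '' (S : Set {x : G // x ∉ Subgroup.center G})
  have hs : ∀ g ∈ s, ∀ z ∈ Subgroup.center G, g * z ∈ s := by
    rintro _ ⟨v, hv, rfl⟩ z hz
    have hvz : (v : G) * z ∉ Subgroup.center G := (Subgroup.mul_mem_cancel_right _ hz).not.mpr v.2
    refine ⟨⟨_, hvz⟩, mem_of_card_eq_vertexConnectivity _ hcard hS hv fun u hu => ?_, rfl⟩
    exact (ncGraph_adj_iff_of_eq_mul_center hz rfl).mpr hu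
  have hdvd := Subgroup.card_dvd_card_of_forall_mul_mem _ hs
  rwa [Nat.card_image_of_injective Subtype.val_injective, Nat.card_coe_set_eq,
    Set.ncard_coe_finset, hcard] at hdvd

theorem stmt_17 (G : Type*) [Group G] [Fintype G]
    (hG : ∃ a b : G, a * b ≠ b * a) :
    Nat.card (Subgroup.center G) ∣ vertexConnectivity (ncGraph G) :=
  stmt_17_general G
end

section
/- Let n ≥ 2. Every non-abelian group H of order 16 whose non-commuting graph is considered satisfies: Γ_H is isomorphic to either the complete 5-partite graph K with four parts of size 2 and one part of size 6, or the complete tripartite graph with three parts of size 4. -/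
open Subgroup SimpleGraph

namespace SimpleGraph.IsCompleteMultipartite

variable {V : Type*} [Finite V] {G : SimpleGraph V} (h : G.IsCompleteMultipartite)
include h

theorem card_eq_sum_card_parts [Fintype (Quotient h.setoid)] :
    Nat.card V = ∑ c : Quotient h.setoid, Nat.card {w // ¬ G.Adj c.out w} :=
  (Nat.card_congr h.iso.toEquiv).trans Nat.card_sigma

theorem nonempty_iso_completeMultipartiteGraph {ι : Type*} {W : ι → Type*} [∀ i, Finite (W i)]
    (e : Quotient h.setoid ≃ ι)
    (hcard : ∀ v, Nat.card {w // ¬ G.Adj v w} = Nat.card (W (e ⟦v⟧))) :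
    Nonempty (G ≃g completeMultipartiteGraph W) := by
  have hparts (c : Quotient h.setoid) : Nonempty ({w // ¬ G.Adj c.out w} ≃ W (e c)) :=
    Finite.card_eq.mp (by rw [hcard, Quotient.out_eq])
  exact ⟨h.iso.trans
    ⟨Equiv.sigmaCongr e fun c => (hparts c).some, by simp [Equiv.sigmaCongr]⟩⟩

end SimpleGraph.IsCompleteMultipartite

theorem exists_equiv_fin_apply_eq {α : Type*} [Finite α] {n : ℕ} (h : Nat.card α = n) (a : α)
    (i : Fin n) : ∃ e : α ≃ Fin n, e a = i :=
  let e₀ := Finite.equivFinOfCardEq h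
  ⟨e₀.trans (Equiv.swap (e₀ a) i), by simp⟩

section CenterAndCentralizers

variable {G : Type*} [Group G]

theorem isMulCommutative_of_index_center_le_two [Finite G] (h : (center G).index ≤ 2) :
    IsMulCommutative G := by
  have : IsCyclic (G ⧸ center G) := by
    have hpos : 0 < Nat.card (G ⧸ center G) := Nat.card_pos
    rw [index] at h
    interval_cases hq : Nat.card (G ⧸ center G)
    · exact @isCyclic_of_subsingleton _ _ (Nat.card_eq_one_iff_unique.mp hq).1
    · exact isCyclic_of_prime_card hq
  exact isMulCommutative_of_isCyclic_quotient_center_self G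

theorem two_mul_card_le_card_of_lt [Finite G] {K L : Subgroup G} (h : K < L) :
    2 * Nat.card K ≤ Nat.card L := by
  obtain ⟨k, hk⟩ := card_dvd_of_le h.le
  have hK : 0 < Nat.card K := Nat.card_pos
  have hL : 0 < Nat.card L := Nat.card_pos
  have hne : Nat.card K ≠ Nat.card L := fun he => h.ne (eq_of_le_of_card_ge h.le he.ge)
  rcases k with _ | _ | k
  · omega
  · omega
  · rw [hk]
    nlinarith

theorem center_lt_centralizer {x : G} (hx : x ∉ center G) : center G < centralizer {x} :=
  SetLike.lt_iff_le_and_exists.mpr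
    ⟨center_le_centralizer _, x, mem_centralizer_singleton_iff.mpr rfl, hx⟩

theorem two_mul_card_centralizer_le [Finite G] {x : G} (hx : x ∉ center G) :
    2 * Nat.card (centralizer {x}) ≤ Nat.card G := by
  have hne : centralizer {x} ≠ ⊤ := fun h => hx (centralizer_eq_top_iff_subset.mp h rfl)
  simpa using two_mul_card_le_card_of_lt hne.lt_top

theorem isMulCommutative_centralizer [Finite G] (hZ : (center G).index ≤ 8) {x : G}
    (hx : x ∉ center G) : IsMulCommutative (centralizer {x}) := by
  set C := centralizer {x}
  refine isMulCommutative_of_index_center_le_two ?_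
  have hZC : (center G).subgroupOf C < center C := by
    refine SetLike.lt_iff_le_and_exists.mpr ⟨fun g hg => ?_,
      ⟨x, mem_centralizer_singleton_iff.mpr rfl⟩,
      mem_center_iff.mpr fun k => Subtype.ext (mem_centralizer_singleton_iff.mp k.2), hx⟩
    rw [mem_subgroupOf] at hg
    exact mem_center_iff.mpr fun k => Subtype.ext (mem_center_iff.mp hg k)
  have hcenter := two_mul_card_le_card_of_lt hZC
  rw [Nat.card_congr (subgroupOfEquivOfLe (center_le_centralizer {x})).toEquiv] at hcenter
  have hC := two_mul_card_centralizer_le hx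
  have hindexC := card_mul_index (center C)
  have hindexG := card_mul_index (center G)
  have hpos : 0 < Nat.card (center G) := Nat.card_pos
  nlinarith

theorem centralizer_le_centralizer_of_commute [Finite G] (hZ : (center G).index ≤ 8) {x y : G}
    (hx : x ∉ center G) (hxy : Commute x y) : centralizer {x} ≤ centralizer {y} :=
  have := isMulCommutative_centralizer hZ hx
  (le_centralizer _).trans
    (centralizer_le (Set.singleton_subset_iff.mpr (mem_centralizer_singleton_iff.mpr hxy.symm)))

theorem commute_trans_of_notMem_center [Finite G] (hZ : (center G).index ≤ 8) {a b c : G}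
    (hb : b ∉ center G) (hab : Commute a b) (hbc : Commute b c) : Commute a c :=
  mem_centralizer_singleton_iff.mp
    (centralizer_le_centralizer_of_commute hZ hb hbc (mem_centralizer_singleton_iff.mpr hab))

theorem index_center_le_four_of_isMulCommutative {A B : Subgroup G} [IsMulCommutative A]
    [IsMulCommutative B] (hA : A.index = 2) (hB : B.index = 2) (hAB : A ≠ B) :
    (center G).index ≤ 4 := by
  have hsup : A ⊔ B = ⊤ := by
    have hdvd : (A ⊔ B).index ∣ 2 := hA ▸ index_dvd_of_le le_sup_left
    rcases (Nat.dvd_prime Nat.prime_two).mp hdvd with h | h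
    · exact index_eq_one.mp h
    · have hBA : B ≤ A := by
        have := relIndex_mul_index (le_sup_left : A ≤ A ⊔ B)
        rw [hA, h] at this
        exact le_sup_right.trans (relIndex_eq_one.mp (by omega : A.relIndex (A ⊔ B) = 1))
      have := relIndex_mul_index hBA
      rw [hA, hB] at this
      exact absurd (le_antisymm (relIndex_eq_one.mp (by omega : B.relIndex A = 1)) hBA) hAB
  have hinf : A ⊓ B ≤ center G := by
    intro g hg
    have hA' := (le_centralizer A).trans (centralizer_le (Set.singleton_subset_iff.mpr hg.1))
    have hB' := (le_centralizer B).trans (centralizer_le (Set.singleton_subset_iff.mpr hg.2))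
    exact mem_center_iff.mpr fun h =>
      mem_centralizer_singleton_iff.mp ((sup_le hA' hB') (hsup ▸ mem_top h))
  have : (A ⊓ B).FiniteIndex := ⟨index_inf_ne_zero (by omega) (by omega)⟩
  calc (center G).index ≤ (A ⊓ B).index := index_antitone hinf
    _ ≤ A.index * B.index := index_inf_le
    _ = 4 := by rw [hA, hB]

theorem ConjClasses.nat_card_carrier_mk (g : G) :
    Nat.card (ConjClasses.mk g).carrier = (centralizer {g}).index := by
  have hstab : MulAction.stabilizer (ConjAct G) g =
      (centralizer {g}).map ((ConjAct.toConjAct : G ≃* ConjAct G) : G →* ConjAct G) := by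
    ext c
    rw [MulAction.mem_stabilizer_iff, ConjAct.smul_def, mul_inv_eq_iff_eq_mul]
    refine ⟨fun hc => ⟨ConjAct.ofConjAct c, mem_centralizer_singleton_iff.mpr hc, rfl⟩, ?_⟩
    rintro ⟨h, hh, rfl⟩
    exact mem_centralizer_singleton_iff.mp hh
  have := MulAction.index_stabilizer (ConjAct G) g
  rw [hstab, index_map_equiv, ConjAct.orbit_eq_carrier_conjClasses] at this
  rw [this, Nat.card_coe_set_eq]

theorem exists_notMem_center_not_dvd_index_centralizer [Finite G] {d : ℕ}
    (hd : ¬ d ∣ Nat.card G - Nat.card (center G)) :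
    ∃ g ∉ center G, ¬ d ∣ (centralizer {g}).index := by
  by_contra! hdvd
  refine hd ?_
  rw [← Group.nat_card_center_add_sum_card_noncenter_eq_card G, Nat.add_sub_cancel_left]
  refine finsum_mem_induction (d ∣ ·) (dvd_zero d) (fun _ _ => dvd_add) ?_
  rintro ⟨g⟩ hc
  have hg : g ∉ center G := fun hg => (ConjClasses.mk_bijOn G).mapsTo hg hc
  rw [ConjClasses.quot_mk_eq_mk, ConjClasses.nat_card_carrier_mk]
  exact hdvd g hg

end CenterAndCentralizers

section NonCommutingGraph

variable {G : Type*} [Group G] [Finite G]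

theorem ncGraph_isCompleteMultipartite (hZ : (center G).index ≤ 8) :
    (ncGraph G).IsCompleteMultipartite :=
  ⟨fun _ b _ hab hbc =>
    not_not.mpr (commute_trans_of_notMem_center hZ b.2 (not_not.mp hab) (not_not.mp hbc))⟩

theorem card_notMem_subgroup (K : Subgroup G) :
    Nat.card {x : G // x ∉ K} = Nat.card G - Nat.card K := by
  have := Set.ncard_add_ncard_compl (K : Set G)
  rw [← Nat.card_coe_set_eq, ← Nat.card_coe_set_eq] at this
  exact Nat.eq_sub_of_add_eq' this

theorem card_not_adj_ncGraph (x : {x : G // x ∉ center G}) :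
    Nat.card {y // ¬ (ncGraph G).Adj x y} =
      Nat.card (centralizer {(x : G)}) - Nat.card (center G) := by
  have e : {y // ¬ (ncGraph G).Adj x y} ≃ ↥((centralizer {(x : G)} : Set G) \ center G) :=
    (Equiv.subtypeSubtypeEquivSubtypeInter (· ∉ center G)
      fun y => ¬ (x : G) * y ≠ y * x).trans
      (Equiv.subtypeEquivRight fun y => by simp [mem_centralizer_singleton_iff, eq_comm, and_comm])
  rw [Nat.card_congr e, Nat.card_coe_set_eq, Set.ncard_sdiff (center_le_centralizer _)]
  rfl

end NonCommutingGraph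

section OrderSixteen

variable {G : Type*} [Group G] [Finite G] (hG : Nat.card G = 16)
include hG

theorem card_center_eq_two_or_four (hnc : ¬ IsMulCommutative G) :
    Nat.card (center G) = 2 ∨ Nat.card (center G) = 4 := by
  have hp : IsPGroup 2 G := IsPGroup.of_card (n := 4) hG
  have : Nontrivial G := Finite.one_lt_card_iff_nontrivial.mp (by omega)
  have h2 : 2 ≤ Nat.card (center G) :=
    Finite.one_lt_card_iff_nontrivial.mpr hp.center_nontrivial
  have h3 : 3 ≤ (center G).index := by
    by_contra h
    exact hnc (isMulCommutative_of_index_center_le_two (by omega))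
  have hmul := card_mul_index (center G)
  have hdvd : Nat.card (center G) ∣ 16 := hG ▸ card_subgroup_dvd_card _
  have hle : Nat.card (center G) ≤ 5 := by nlinarith
  interval_cases Nat.card (center G) <;> omega

theorem card_centralizer_of_card_center_eq_four (hZ : Nat.card (center G) = 4) {x : G}
    (hx : x ∉ center G) : Nat.card (centralizer {x}) = 8 := by
  have h1 := two_mul_card_le_card_of_lt (center_lt_centralizer hx)
  have h2 := two_mul_card_centralizer_le hx
  omega

theorem card_centralizer_of_card_center_eq_two (hZ : Nat.card (center G) = 2) {x : G}
    (hx : x ∉ center G) : Nat.card (centralizer {x}) = 4 ∨ Nat.card (centralizer {x}) = 8 := by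
  have h1 := two_mul_card_le_card_of_lt (center_lt_centralizer hx)
  have h2 := two_mul_card_centralizer_le hx
  have hdvd : Nat.card (centralizer {x}) ∣ 16 := hG ▸ card_subgroup_dvd_card _
  rw [hZ] at h1
  have h3 : Nat.card (centralizer {x}) ≤ 8 := by omega
  interval_cases Nat.card (centralizer {x}) <;> omega

theorem exists_card_centralizer_eq_eight (hZ : Nat.card (center G) = 2) :
    ∃ x ∉ center G, Nat.card (centralizer {x}) = 8 := by
  obtain ⟨x, hx, hndvd⟩ :=
    exists_notMem_center_not_dvd_index_centralizer (d := 4) (by rw [hG, hZ]; decide)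
  refine ⟨x, hx, ?_⟩
  have := card_mul_index (centralizer {x})
  rcases card_centralizer_of_card_center_eq_two hG hZ hx with h | h
  · rw [h, hG] at this
    have h4 : (centralizer {x}).index = 4 := by omega
    exact absurd (h4 ▸ dvd_rfl) hndvd
  · exact h

theorem commute_of_card_centralizer_eq_eight (hZ : Nat.card (center G) = 2) {x y : G}
    (hx : x ∉ center G) (hy : y ∉ center G) (hcx : Nat.card (centralizer {x}) = 8)
    (hcy : Nat.card (centralizer {y}) = 8) : Commute x y := by
  by_contra hxy
  have hidx := card_mul_index (center G)
  rw [hZ, hG] at hidx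
  have := isMulCommutative_centralizer (by omega) hx
  have := isMulCommutative_centralizer (by omega) hy
  have hne : centralizer {x} ≠ centralizer {y} := fun h =>
    hxy (mem_centralizer_singleton_iff.mp (h ▸ mem_centralizer_singleton_iff.mpr rfl)).symm
  have hix := card_mul_index (centralizer {x})
  have hiy := card_mul_index (centralizer {y})
  rw [hcx, hG] at hix
  rw [hcy, hG] at hiy
  have := index_center_le_four_of_isMulCommutative (by omega) (by omega) hne
  omega

theorem nonempty_iso_ncGraph_of_card_center_eq_four (hZ : Nat.card (center G) = 4) :
    Nonempty (ncGraph G ≃g completeMultipartiteGraph fun _ : Fin 3 => Fin 4) := by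
  have hidx := card_mul_index (center G)
  rw [hZ, hG] at hidx
  have h := ncGraph_isCompleteMultipartite (G := G) (by omega)
  have hpart (v : {x : G // x ∉ center G}) : Nat.card {w // ¬ (ncGraph G).Adj v w} = 4 := by
    rw [card_not_adj_ncGraph, card_centralizer_of_card_center_eq_four hG hZ v.2, hZ]
  have := Fintype.ofFinite (Quotient h.setoid)
  have hsum := h.card_eq_sum_card_parts
  simp only [hpart, Finset.sum_const, Finset.card_univ, smul_eq_mul, card_notMem_subgroup, hG,
    hZ] at hsum
  have hQ : Nat.card (Quotient h.setoid) = 3 := by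
    rw [Nat.card_eq_fintype_card]
    omega
  exact h.nonempty_iso_completeMultipartiteGraph (Finite.equivFinOfCardEq hQ) fun v => by
    rw [hpart, Nat.card_eq_fintype_card, Fintype.card_fin]

theorem card_not_adj_ncGraph_of_commute (hZ : Nat.card (center G) = 2) {x₀ : G}
    (hx₀ : x₀ ∉ center G) (hc₀ : Nat.card (centralizer {x₀}) = 8)
    {v : {x : G // x ∉ center G}} (hv : Commute (v : G) x₀) :
    Nat.card {w // ¬ (ncGraph G).Adj v w} = 6 := by
  have hidx := card_mul_index (center G)
  rw [hZ, hG] at hidx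
  have hle := card_le_of_le (centralizer_le_centralizer_of_commute (by omega) hx₀ hv.symm)
  rw [card_not_adj_ncGraph, hZ]
  rcases card_centralizer_of_card_center_eq_two hG hZ v.2 with h | h <;> omega

theorem card_not_adj_ncGraph_of_not_commute (hZ : Nat.card (center G) = 2) {x₀ : G}
    (hx₀ : x₀ ∉ center G) (hc₀ : Nat.card (centralizer {x₀}) = 8)
    {v : {x : G // x ∉ center G}} (hv : ¬ Commute (v : G) x₀) :
    Nat.card {w // ¬ (ncGraph G).Adj v w} = 2 := by
  rw [card_not_adj_ncGraph, hZ]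
  rcases card_centralizer_of_card_center_eq_two hG hZ v.2 with h | h
  · rw [h]
  · exact absurd (commute_of_card_centralizer_eq_eight hG hZ v.2 hx₀ h hc₀) hv

theorem nonempty_iso_ncGraph_of_card_center_eq_two (hZ : Nat.card (center G) = 2) :
    Nonempty (ncGraph G ≃g completeMultipartiteGraph
      fun i : Fin 5 => if (i : ℕ) < 4 then Fin 2 else Fin 6) := by
  classical
  have hidx := card_mul_index (center G)
  rw [hZ, hG] at hidx
  have h := ncGraph_isCompleteMultipartite (G := G) (by omega)
  obtain ⟨x₀, hx₀, hc₀⟩ := exists_card_centralizer_eq_eight hG hZ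
  set c₀ : Quotient h.setoid := ⟦⟨x₀, hx₀⟩⟧
  have hpart (v : {x : G // x ∉ center G}) :
      Nat.card {w // ¬ (ncGraph G).Adj v w} = if ⟦v⟧ = c₀ then 6 else 2 := by
    have hc : ⟦v⟧ = c₀ ↔ Commute (v : G) x₀ := Quotient.eq.trans not_not
    split_ifs with hv
    · exact card_not_adj_ncGraph_of_commute hG hZ hx₀ hc₀ (hc.mp hv)
    · exact card_not_adj_ncGraph_of_not_commute hG hZ hx₀ hc₀ (mt hc.mpr hv)
  have := Fintype.ofFinite (Quotient h.setoid)
  have hsum := h.card_eq_sum_card_parts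
  simp only [card_notMem_subgroup, hG, hZ, Nat.reduceSub, hpart, Quotient.out_eq, Finset.sum_ite,
    Finset.filter_eq', Finset.mem_univ, ↓reduceIte, Finset.sum_const, Finset.card_singleton,
    smul_eq_mul, one_mul, Finset.filter_ne', Finset.card_erase_of_mem, Finset.card_univ] at hsum
  have hQ : Nat.card (Quotient h.setoid) = 5 := by
    have : 0 < Fintype.card (Quotient h.setoid) := Fintype.card_pos_iff.mpr ⟨c₀⟩
    rw [Nat.card_eq_fintype_card]
    omega
  obtain ⟨e, he⟩ := exists_equiv_fin_apply_eq hQ c₀ 4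
  have (i : Fin 5) : Finite (if (i : ℕ) < 4 then Fin 2 else Fin 6) := by
    split_ifs <;> infer_instance
  refine h.nonempty_iso_completeMultipartiteGraph e fun v => ?_
  rw [hpart]
  by_cases hv : ⟦v⟧ = c₀
  · rw [if_pos hv, hv, he]
    simp
  · have hlt : ((e ⟦v⟧ : Fin 5) : ℕ) < 4 := by
      have : e ⟦v⟧ ≠ 4 := he ▸ e.injective.ne hv
      omega
    rw [if_neg hv, if_pos hlt]
    simp

end OrderSixteen

theorem stmt_19 (H : Type*) [Group H] [Fintype H]
    (h16 : Fintype.card H = 16) (hH : ∃ a b : H, a * b ≠ b * a) :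
    Nonempty (ncGraph H ≃g SimpleGraph.completeMultipartiteGraph
        (fun i : Fin 5 => if (i : ℕ) < 4 then Fin 2 else Fin 6)) ∨
    Nonempty (ncGraph H ≃g SimpleGraph.completeMultipartiteGraph
        (fun _ : Fin 3 => Fin 4)) := by
  have hG : Nat.card H = 16 := by rw [Nat.card_eq_fintype_card, h16]
  have hnc : ¬ IsMulCommutative H := fun hc =>
    let ⟨a, b, hab⟩ := hH
    hab (hc.is_comm.comm a b)
  rcases card_center_eq_two_or_four hG hnc with hZ | hZ
  · exact Or.inl (nonempty_iso_ncGraph_of_card_center_eq_two hG hZ)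
  · exact Or.inr (nonempty_iso_ncGraph_of_card_center_eq_four hG hZ)
end
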